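/- Let Σ be symmetric positive definite and Γ symmetric positive semidefinite, both m×m; let y^m, y, ȳ ∈ ℝ^m, and α ≥ 1. Then log det(Σ² + Γ)/det(Σ²) − ‖y^m − y‖²_{Σ^{-2}} + ‖y^m − ȳ‖²_{(Σ²+Γ)^{-1}} + 2 log α ≤ 2ψ, where ψ = (1/2)tr(Σ^{-2}Γ) + φ(‖ȳ − y‖²_{Σ^{-2}}, ‖y^m − ȳ‖_{Σ^{-2}}) + log α and φ(a,b) = a/2 + b√a. -/

import Mathlib

/-!
Each term is bounded separately. Writing `Σ⁻² = Bᴴ B`, the ratio of determinants is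
`det (1 + B Γ Bᴴ) = ∏ (1 + λᵢ)` with `λᵢ ≥ 0`, and `log (1 + λ) ≤ λ` bounds its logarithm by
`∑ λᵢ = tr (Σ⁻² Γ)`. Since `Σ² ≤ Σ² + Γ` in the Loewner order, the `(Σ² + Γ)⁻¹`-norm is dominated
by the `Σ⁻²`-norm. Finally `y^m - y = (y^m - ȳ) + (ȳ - y)`, and Cauchy–Schwarz for the
`Σ⁻²`-inner product bounds the cross term of the expanded square.
-/

open Matrix

namespace Matrix

open scoped MatrixOrder

variable {n : Type*} [Fintype n]

lemma IsHermitian.dotProduct_mulVec_comm {M : Matrix n n ℝ} (hM : M.IsHermitian) (u v : n → ℝ) :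
    u ⬝ᵥ M *ᵥ v = v ⬝ᵥ M *ᵥ u := by
  rw [dotProduct_mulVec, ← mulVec_transpose, ← conjTranspose_eq_transpose_of_trivial, hM.eq,
    dotProduct_comm]

lemma IsHermitian.add_dotProduct_mulVec_add {M : Matrix n n ℝ} (hM : M.IsHermitian)
    (u v : n → ℝ) :
    (u + v) ⬝ᵥ M *ᵥ (u + v) = u ⬝ᵥ M *ᵥ u + 2 * (u ⬝ᵥ M *ᵥ v) + v ⬝ᵥ M *ᵥ v := by
  rw [mulVec_add, dotProduct_add, add_dotProduct, add_dotProduct, hM.dotProduct_mulVec_comm v u]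
  ring

lemma PosSemidef.dotProduct_mulVec_self_nonneg {M : Matrix n n ℝ} (hM : M.PosSemidef)
    (u : n → ℝ) : 0 ≤ u ⬝ᵥ M *ᵥ u := by
  simpa using hM.dotProduct_mulVec_nonneg u

lemma PosSemidef.abs_dotProduct_mulVec_le {M : Matrix n n ℝ} (hM : M.PosSemidef) (u v : n → ℝ) :
    |u ⬝ᵥ M *ᵥ v| ≤ √(u ⬝ᵥ M *ᵥ u) * √(v ⬝ᵥ M *ᵥ v) := by
  classical
  obtain ⟨B, rfl⟩ := CStarAlgebra.nonneg_iff_eq_star_mul_self.mp hM.nonneg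
  simp only [star_eq_conjTranspose, ← mulVec_mulVec, dotProduct_mulVec _ Bᴴ, vecMul_conjTranspose,
    star_trivial]
  rw [← Real.sqrt_mul (by simpa [dotProduct, ← sq] using Finset.sum_nonneg fun i _ => sq_nonneg _)]
  refine Real.abs_le_sqrt ?_
  simpa [dotProduct, pow_two] using Finset.sum_mul_sq_le_sq_mul_sq Finset.univ (B *ᵥ u) (B *ᵥ v)

lemma PosDef.dotProduct_inv_mulVec_le_of_posSemidef_sub [DecidableEq n] {X Y : Matrix n n ℝ}
    (hX : X.PosDef) (hXY : (Y - X).PosSemidef) (w : n → ℝ) :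
    w ⬝ᵥ Y⁻¹ *ᵥ w ≤ w ⬝ᵥ X⁻¹ *ᵥ w := by
  have hY : Y.PosDef := by simpa using hX.add_posSemidef hXY
  set u := Y⁻¹ *ᵥ w
  set v := X⁻¹ *ᵥ w
  have hYu : Y *ᵥ u = w := by simp [u, mulVec_mulVec, mul_nonsing_inv _ hY.det_pos.ne'.isUnit]
  have hXv : X *ᵥ v = w := by simp [v, mulVec_mulVec, mul_nonsing_inv _ hX.det_pos.ne'.isUnit]
  have hs : 0 ≤ w ⬝ᵥ u := hY.inv.posSemidef.dotProduct_mulVec_self_nonneg w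
  have ht : 0 ≤ w ⬝ᵥ v := hX.inv.posSemidef.dotProduct_mulVec_self_nonneg w
  have huXu : u ⬝ᵥ X *ᵥ u ≤ w ⬝ᵥ u := by
    have := hXY.dotProduct_mulVec_self_nonneg u
    rw [sub_mulVec, dotProduct_sub, hYu, dotProduct_comm u w] at this
    linarith
  have hcs : w ⬝ᵥ u ≤ √(w ⬝ᵥ u) * √(w ⬝ᵥ v) := calc
    w ⬝ᵥ u = u ⬝ᵥ X *ᵥ v := by rw [hXv, dotProduct_comm]
    _ ≤ √(u ⬝ᵥ X *ᵥ u) * √(v ⬝ᵥ X *ᵥ v) :=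
      le_of_abs_le (hX.posSemidef.abs_dotProduct_mulVec_le u v)
    _ ≤ √(w ⬝ᵥ u) * √(w ⬝ᵥ v) := by
      rw [hXv, dotProduct_comm v w]
      gcongr
  nlinarith [Real.sq_sqrt hs, Real.sq_sqrt ht, Real.sqrt_nonneg (w ⬝ᵥ u),
    Real.sqrt_nonneg (w ⬝ᵥ v), sq_nonneg (√(w ⬝ᵥ u) - √(w ⬝ᵥ v))]

lemma PosSemidef.log_det_one_add_le_trace [DecidableEq n] {B : Matrix n n ℝ} (hB : B.PosSemidef) :
    Real.log (1 + B).det ≤ B.trace := by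
  have hC : (1 + B).PosDef := PosDef.one.add_posSemidef hB
  set μ := hC.isHermitian.eigenvalues
  have htrace : B.trace = ∑ i, (μ i - 1) := by
    have h := hC.isHermitian.trace_eq_sum_eigenvalues
    simp only [RCLike.ofReal_real_eq_id, id] at h
    rw [Finset.sum_sub_distrib, ← h, trace_add, trace_one]
    simp
  rw [hC.isHermitian.det_eq_prod_eigenvalues, htrace]
  simp only [RCLike.ofReal_real_eq_id, id]
  rw [Real.log_prod fun i _ => (hC.eigenvalues_pos i).ne']
  exact Finset.sum_le_sum fun i _ => Real.log_le_sub_one_of_pos (hC.eigenvalues_pos i)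

lemma PosDef.log_det_add_div_det_le_trace [DecidableEq n] {A Γ : Matrix n n ℝ} (hA : A.PosDef)
    (hΓ : Γ.PosSemidef) : Real.log ((A + Γ).det / A.det) ≤ (A⁻¹ * Γ).trace := by
  obtain ⟨B, hB⟩ := CStarAlgebra.nonneg_iff_eq_star_mul_self.mp hA.inv.posSemidef.nonneg
  rw [star_eq_conjTranspose] at hB
  have hdet : (A + Γ).det / A.det = (1 + B * Γ * Bᴴ).det := calc
    (A + Γ).det / A.det = (A⁻¹ * (A + Γ)).det := by
      rw [det_mul, det_nonsing_inv, Ring.inverse_eq_inv', div_eq_inv_mul]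
    _ = (1 + Bᴴ * (B * Γ)).det := by
      rw [Matrix.mul_add, nonsing_inv_mul _ hA.det_pos.ne'.isUnit, hB, Matrix.mul_assoc]
    _ = (1 + B * Γ * Bᴴ).det := det_one_add_mul_comm _ _
  have htrace : (A⁻¹ * Γ).trace = (B * Γ * Bᴴ).trace := by
    rw [hB, trace_mul_cycle, trace_mul_comm, Matrix.mul_assoc]
  rw [hdet, htrace]
  exact (hΓ.mul_mul_conjTranspose_same B).log_det_one_add_le_trace

end Matrix

theorem log_ratio_le_two_psi_general {m : Type*} [Fintype m] [DecidableEq m]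
    (S Γ : Matrix m m ℝ) (hS : S.PosDef) (hΓ : Γ.PosSemidef)
    (ym y ybar : m → ℝ) (α : ℝ) :
    Real.log ((S ^ 2 + Γ).det / (S ^ 2).det)
        - (ym - y) ⬝ᵥ ((S ^ 2)⁻¹ *ᵥ (ym - y))
        + (ym - ybar) ⬝ᵥ ((S ^ 2 + Γ)⁻¹ *ᵥ (ym - ybar))
        + 2 * Real.log α ≤
      2 * ((1 / 2) * ((S ^ 2)⁻¹ * Γ).trace
        + (((ybar - y) ⬝ᵥ ((S ^ 2)⁻¹ *ᵥ (ybar - y))) / 2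
          + Real.sqrt ((ym - ybar) ⬝ᵥ ((S ^ 2)⁻¹ *ᵥ (ym - ybar)))
            * Real.sqrt ((ybar - y) ⬝ᵥ ((S ^ 2)⁻¹ *ᵥ (ybar - y))))
        + Real.log α) := by
  have hA : (S ^ 2).PosDef := (hS.posSemidef.pow 2).posDef_iff_isUnit.mpr (hS.isUnit.pow 2)
  have hN : (S ^ 2)⁻¹.PosSemidef := hA.inv.posSemidef
  have hlog := hA.log_det_add_div_det_le_trace hΓ
  have hinv := hA.dotProduct_inv_mulVec_le_of_posSemidef_sub (Y := S ^ 2 + Γ)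
    (by rwa [add_sub_cancel_left]) (ym - ybar)
  have hexpand := hN.isHermitian.add_dotProduct_mulVec_add (ym - ybar) (ybar - y)
  have hcross := hN.abs_dotProduct_mulVec_le (ym - ybar) (ybar - y)
  have hnonneg := hN.dotProduct_mulVec_self_nonneg (ybar - y)
  rw [sub_add_sub_cancel] at hexpand
  linarith [neg_abs_le ((ym - ybar) ⬝ᵥ (S ^ 2)⁻¹ *ᵥ (ybar - y))]

/-- For `Σ` symmetric positive definite, `Γ` symmetric positive semidefinite,
vectors `y^m, y, ȳ ∈ ℝ^m` and `α ≥ 1`: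
`log(det(Σ²+Γ)/det(Σ²)) − ‖y^m−y‖²_{Σ⁻²} + ‖y^m−ȳ‖²_{(Σ²+Γ)⁻¹} + 2 log α ≤ 2ψ`,
with `ψ = (1/2)tr(Σ⁻²Γ) + φ(‖ȳ−y‖²_{Σ⁻²}, ‖y^m−ȳ‖_{Σ⁻²}) + log α`,
`φ(a,b) = a/2 + b√a`. -/
theorem log_ratio_le_two_psi {m : Type*} [Fintype m] [DecidableEq m]
    (S Γ : Matrix m m ℝ) (hS : S.PosDef) (hΓ : Γ.PosSemidef)
    (ym y ybar : m → ℝ) (α : ℝ) (hα : 1 ≤ α) :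
    Real.log ((S ^ 2 + Γ).det / (S ^ 2).det)
        - (ym - y) ⬝ᵥ ((S ^ 2)⁻¹ *ᵥ (ym - y))
        + (ym - ybar) ⬝ᵥ ((S ^ 2 + Γ)⁻¹ *ᵥ (ym - ybar))
        + 2 * Real.log α ≤
      2 * ((1 / 2) * ((S ^ 2)⁻¹ * Γ).trace
        + (((ybar - y) ⬝ᵥ ((S ^ 2)⁻¹ *ᵥ (ybar - y))) / 2
          + Real.sqrt ((ym - ybar) ⬝ᵥ ((S ^ 2)⁻¹ *ᵥ (ym - ybar)))
            * Real.sqrt ((ybar - y) ⬝ᵥ ((S ^ 2)⁻¹ *ᵥ (ybar - y))))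
        + Real.log α) :=
  log_ratio_le_two_psi_general S Γ hS hΓ ym y ybar α
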